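/- arXiv:0802.2347 — 3 statements merged into one kernel-verified Lean document; each statement's English description precedes it below -/
import Mathlib

section
/- The Borel transform of the semicircle measure satisfies F(z) = ∫_{-1}^{1} (x - z)^{-1} dμ_c(x) = -2z(1 - √(1 - 1/z²)) for all complex z with |z| > 1, where the square root is the principal branch. -/
/-!
For `‖z‖ > 1` expand `(x - z)⁻¹ = -∑ xⁿ / z^(n+1)` and integrate termwise, so that
`F z = -∑ mₙ / z^(n+1)` with `mₙ` the moments of `μ_c`. Odd moments vanish by symmetry, and
integrating the derivative of `x^(n+1) (1 - x²)^(3/2)` over `[-1, 1]` gives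
`(n + 4) m_{n+2} = (n + 1) mₙ`, whence `m_{2k} = 2 (-1)ᵏ (1/2 choose k+1)`, which is
`catalan k / 4ᵏ`. The series is then `2z` times the binomial series of `(1 - z⁻²)^(1/2)` without
its constant term.
-/

open Real Set MeasureTheory
open scoped Interval

lemma Ring.succ_nsmul_choose_succ {R : Type*} [Ring R] [BinomialRing R] (r : R) (n : ℕ) :
    (n + 1) • Ring.choose r (n + 1) = Ring.choose r n * (r - n) := by
  simpa [Ring.choose_one_right] using Ring.choose_smul_choose r (Nat.le_succ n)

lemma Complex.hasSum_choose_mul_pow (a : ℂ) {x : ℂ} (hx : ‖x‖ < 1) :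
    HasSum (fun n => Ring.choose a n * x ^ n) ((1 + x) ^ a) := by
  have h := (Complex.one_add_cpow_hasFPowerSeriesOnBall_zero (a := a)).hasSum (y := x)
    (by simpa [← ofReal_norm] using hx)
  simpa [binomialSeries, FormalMultilinearSeries.ofScalars_apply_eq, mul_comm] using h

lemma hasSum_neg_inv_pow_succ_mul_pow {x z : ℂ} (hxz : ‖x‖ < ‖z‖) :
    HasSum (fun n : ℕ => -(z ^ (n + 1))⁻¹ * x ^ n) (x - z)⁻¹ := by
  have hz : z ≠ 0 := norm_pos_iff.mp ((norm_nonneg x).trans_lt hxz)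
  have hq : ‖x / z‖ < 1 := by rwa [norm_div, div_lt_one ((norm_nonneg x).trans_lt hxz)]
  have hzx : z - x ≠ 0 := sub_ne_zero.mpr (by rintro rfl; exact lt_irrefl _ hxz)
  have hsum : -z⁻¹ * (1 - x / z)⁻¹ = (x - z)⁻¹ := by
    rw [← neg_sub z x]; field_simp
  rw [← hsum]
  refine ((hasSum_geometric_of_norm_lt_one hq).mul_left (-z⁻¹)).congr_fun fun n => ?_
  rw [div_pow, pow_succ]
  field_simp

lemma hasSum_integral_inv_sub_mul (g : ℝ → ℝ) (hg : IntervalIntegrable g volume (-1) 1)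
    {z : ℂ} (hz : 1 < ‖z‖) :
    HasSum (fun n : ℕ => -(z ^ (n + 1))⁻¹ * ((∫ x in (-1 : ℝ)..1, x ^ n * g x : ℝ) : ℂ))
      (∫ x in (-1 : ℝ)..1, ((x : ℂ) - z)⁻¹ * (g x : ℂ)) := by
  set r := ‖z‖⁻¹
  have hr0 : 0 ≤ r := by positivity
  have hr1 : r < 1 := inv_lt_one_of_one_lt₀ hz
  have hx : ∀ x ∈ Ι (-1 : ℝ) 1, |x| ≤ 1 := fun x hx => by
    rw [uIoc_of_le (by norm_num)] at hx; exact abs_le.mpr ⟨hx.1.le, hx.2⟩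
  have hterm : ∀ n : ℕ, ∫ x in (-1 : ℝ)..1, -(z ^ (n + 1))⁻¹ * ((x ^ n * g x : ℝ) : ℂ) =
      -(z ^ (n + 1))⁻¹ * ((∫ x in (-1 : ℝ)..1, x ^ n * g x : ℝ) : ℂ) := fun n => by
    rw [intervalIntegral.integral_const_mul, intervalIntegral.integral_ofReal]
  simp only [← hterm]
  refine intervalIntegral.hasSum_integral_of_dominated_convergence
    (fun n x => r ^ (n + 1) * ‖g x‖) (fun n => ?_) (fun n => ?_) ?_ ?_ ?_
  · exact ((((continuous_pow n).aestronglyMeasurable.mul hg.def'.aestronglyMeasurable)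
      |> Complex.continuous_ofReal.comp_aestronglyMeasurable).const_mul _)
  · refine ae_of_all _ fun x hx' => ?_
    rw [norm_mul, norm_neg, norm_inv, norm_pow, Complex.norm_real, norm_mul, norm_pow,
      Real.norm_eq_abs, inv_pow, ← mul_assoc]
    gcongr
    exact mul_le_of_le_one_right (by positivity) (pow_le_one₀ (abs_nonneg x) (hx x hx'))
  · have hgeom : Summable fun n : ℕ => r ^ (n + 1) :=
      (summable_nat_add_iff 1).mpr (summable_geometric_of_lt_one hr0 hr1)
    exact ae_of_all _ fun x _ => hgeom.mul_right _
  · simp only [tsum_mul_right]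
    exact hg.norm.const_mul _
  · refine ae_of_all _ fun x hx' => ?_
    have hxz : ‖(x : ℂ)‖ < ‖z‖ := by rw [Complex.norm_real]; exact (hx x hx').trans_lt hz
    refine ((hasSum_neg_inv_pow_succ_mul_pow hxz).mul_right (g x : ℂ)).congr_fun fun n => ?_
    push_cast; ring

noncomputable def semicircleDensity (x : ℝ) : ℝ := 2 / π * √(1 - x ^ 2)

noncomputable def semicircleMoment (n : ℕ) : ℝ :=
  ∫ x in (-1 : ℝ)..1, x ^ n * semicircleDensity x

@[fun_prop]
lemma continuous_semicircleDensity : Continuous semicircleDensity := by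
  unfold semicircleDensity; fun_prop

lemma semicircleMoment_zero : semicircleMoment 0 = 1 := by
  simp only [semicircleMoment, semicircleDensity, pow_zero, one_mul,
    intervalIntegral.integral_const_mul, integral_sqrt_one_sub_sq]
  field_simp

lemma semicircleMoment_odd (k : ℕ) : semicircleMoment (2 * k + 1) = 0 := by
  have h := intervalIntegral.integral_comp_neg (a := -1) (b := 1)
    fun x : ℝ => x ^ (2 * k + 1) * semicircleDensity x
  simp only [neg_neg, semicircleDensity, neg_sq, Odd.neg_pow (odd_two_mul_add_one k), neg_mul,
    intervalIntegral.integral_neg] at h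
  simp only [semicircleMoment, semicircleDensity]
  linarith

lemma hasDerivAt_pow_mul_one_sub_sq_mul_semicircleDensity (n : ℕ) {x : ℝ} (hx : x ∈ Ioo (-1) 1) :
    HasDerivAt (fun y => y ^ (n + 1) * (1 - y ^ 2) * semicircleDensity y)
      ((n + 1) * (x ^ n * semicircleDensity x) - (n + 4) * (x ^ (n + 2) * semicircleDensity x))
      x := by
  have hpos : 0 < 1 - x ^ 2 := by nlinarith [hx.1, hx.2]
  have hs : √(1 - x ^ 2) ^ 2 = 1 - x ^ 2 := sq_sqrt hpos.le
  have hquad := (hasDerivAt_pow 2 x).const_sub 1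
  refine (((hasDerivAt_pow (n + 1) x).mul hquad).mul ((hquad.sqrt hpos.ne').const_mul (2 / π)))
    |>.congr_deriv ?_
  simp only [semicircleDensity, Pi.mul_apply, Nat.cast_add, Nat.cast_one, add_tsub_cancel_right]
  field_simp
  rw [hs]
  ring

lemma semicircleMoment_add_two (n : ℕ) :
    (n + 4) * semicircleMoment (n + 2) = (n + 1) * semicircleMoment n := by
  have hint (m : ℕ) : IntervalIntegrable (fun x => x ^ m * semicircleDensity x) volume (-1) 1 := by
    apply Continuous.intervalIntegrable; fun_prop
  have hftc := intervalIntegral.integral_eq_sub_of_hasDerivAt_of_le (by norm_num)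
    (by apply Continuous.continuousOn; fun_prop)
    (fun x hx => hasDerivAt_pow_mul_one_sub_sq_mul_semicircleDensity n hx)
    (((hint n).const_mul _).sub ((hint (n + 2)).const_mul _))
  rw [intervalIntegral.integral_sub ((hint n).const_mul _) ((hint (n + 2)).const_mul _),
    intervalIntegral.integral_const_mul, intervalIntegral.integral_const_mul] at hftc
  simp only [semicircleMoment]
  norm_num at hftc
  linarith

lemma semicircleMoment_even (k : ℕ) :
    semicircleMoment (2 * k) = 2 * (-1) ^ k * Ring.choose (1 / 2 : ℝ) (k + 1) := by
  induction k with
  | zero => simp [semicircleMoment_zero]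
  | succ k ih =>
    have hchoose := Ring.succ_nsmul_choose_succ (1 / 2 : ℝ) (k + 1)
    have hrec := semicircleMoment_add_two (2 * k)
    rw [nsmul_eq_mul] at hchoose
    push_cast at hchoose hrec
    rw [ih] at hrec
    rw [show 2 * (k + 1) = 2 * k + 2 by ring]
    refine mul_left_cancel₀ (by positivity : (2 * k + 4 : ℝ) ≠ 0) ?_
    rw [hrec]
    linear_combination 4 * (-1 : ℝ) ^ k * hchoose

lemma hasSum_semicircleMoment_even {z : ℂ} (hz : 1 < ‖z‖) :
    HasSum (fun k => -(z ^ (2 * k + 1))⁻¹ * (semicircleMoment (2 * k) : ℂ))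
      (-2 * z * (1 - (1 - 1 / z ^ 2) ^ ((1 : ℂ) / 2))) := by
  have hz0 : z ≠ 0 := norm_pos_iff.mp (one_pos.trans hz)
  have hu : ‖-(1 / z ^ 2)‖ < 1 := by
    rw [norm_neg, norm_div, norm_one, norm_pow]
    exact (div_lt_one (by positivity)).mpr (one_lt_pow₀ hz two_ne_zero)
  have hbin := ((hasSum_nat_add_iff' 1).mpr
    (Complex.hasSum_choose_mul_pow (1 / 2) hu)).mul_left (2 * z)
  have hval : -2 * z * (1 - (1 - 1 / z ^ 2) ^ ((1 : ℂ) / 2)) = 2 * z *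
      ((1 + -(1 / z ^ 2)) ^ ((1 : ℂ) / 2) -
        ∑ i ∈ Finset.range 1, Ring.choose (1 / 2 : ℂ) i * (-(1 / z ^ 2)) ^ i) := by
    rw [Finset.sum_range_one, Ring.choose_zero_right, pow_zero, mul_one, ← sub_eq_add_neg]
    ring
  rw [hval]
  refine hbin.congr_fun fun k => ?_
  have hpow : (-(1 / z ^ 2)) ^ (k + 1) = -(-1) ^ k / z ^ (2 * k + 2) := by ring
  rw [semicircleMoment_even, hpow]
  push_cast [Complex.ofReal_choose]
  field_simp
  ring

theorem borel_transform_semicircle (z : ℂ) (hz : 1 < ‖z‖) :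
    (∫ x in (-1:ℝ)..1, ((x : ℂ) - z)⁻¹ * (((2 / Real.pi) * Real.sqrt (1 - x ^ 2) : ℝ) : ℂ)) =
      -2 * z * (1 - (1 - 1 / z ^ 2) ^ ((1 : ℂ) / 2)) := by
  have hodd : HasSum (fun k => -(z ^ (2 * k + 1 + 1))⁻¹ * (semicircleMoment (2 * k + 1) : ℂ)) 0 := by
    simpa only [semicircleMoment_odd, Complex.ofReal_zero, mul_zero] using hasSum_zero
  have hmoments := (hasSum_semicircleMoment_even hz).even_add_odd
    (f := fun n => -(z ^ (n + 1))⁻¹ * (semicircleMoment n : ℂ)) hodd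
  rw [add_zero] at hmoments
  exact (hasSum_integral_inv_sub_mul semicircleDensity
    (continuous_semicircleDensity.intervalIntegrable _ _) hz).unique hmoments
end

section
/- In the N-ary tree (N ≥ 1), let η = η₁…η_n be a word of length n ≥ 1, and define v : V → ℝ by v(ω) = n - p(ω, η), where p(ω, η) is the length of the longest common prefix of ω and η. Then v solves Δv = δ_∅ - δ_η, where Δ is the graph Laplacian with unit conductances. -/
/-- Length of the longest common prefix of two words. -/
def lcp {α : Type*} [DecidableEq α] : List α → List α → ℕ
  | a :: as, b :: bs => if a = b then lcp as bs + 1 else 0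
  | _, _ => 0

/-- The graph Laplacian (unit conductances) of the `N`-ary tree, acting on functions on
the vertex set `List (Fin N)` (finite words, words grow by appending letters at the end);
the root `[]` has the `N` children `[i]` as neighbors, and any other word `ω` has its
parent `ω.dropLast` and its `N` children `ω ++ [i]` as neighbors. -/
noncomputable def treeLap (N : ℕ) (v : List (Fin N) → ℝ) (ω : List (Fin N)) : ℝ :=
  if ω = [] then (N : ℝ) * v [] - ∑ i : Fin N, v [i]
  else ((N : ℝ) + 1) * v ω - v ω.dropLast - ∑ i : Fin N, v (ω ++ [i])

/-!
Write `ℓ ω = lcp ω η`, so that `Δv = -Δℓ`. Appending a letter `a` to `ω` raises `ℓ` by one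
exactly when `ω ++ [a]` is still a prefix of `η`, which happens for exactly one letter if `ω` is a
proper prefix of `η` and for none otherwise. Comparing `ℓ` at `ω` with its parent and its
children therefore gives `Δℓ ω = [ω prefix of η] - [ω proper prefix of η] = [ω = η]` for
`ω ≠ []`, and `Δℓ [] = -[η ≠ []]`.
-/

section Lcp

variable {α : Type*} [DecidableEq α]

theorem lcp_append_singleton : ∀ (ω η : List α) (a : α),
    lcp (ω ++ [a]) η = lcp ω η + if ω ++ [a] <+: η then 1 else 0
  | [], [], _ => rfl
  | [], b :: _, a => by by_cases h : a = b <;> simp [lcp, h]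
  | _ :: _, [], _ => by simp [lcp]
  | x :: ω, b :: η, a => by
    by_cases h : x = b
    · simp [lcp, h, lcp_append_singleton ω η a, add_right_comm]
    · simp [lcp, h]

theorem sum_ite_append_singleton_prefix {R : Type*} [AddCommMonoidWithOne R] [Fintype α]
    (ω η : List α) :
    (∑ a : α, if ω ++ [a] <+: η then 1 else 0 : R) = if ω <+: η ∧ ω ≠ η then 1 else 0 := by
  by_cases hω : ω <+: η
  · obtain ⟨t, rfl⟩ := hω
    cases t with
    | nil =>
      have hnot (a : α) : ¬ ω ++ [a] <+: ω := fun h => by simpa using h.length_le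
      simp [hnot]
    | cons b t => simp
  · have hnot (a : α) : ¬ ω ++ [a] <+: η := fun h => hω ((List.prefix_append ω [a]).trans h)
    simp [hnot, hω]

end Lcp

theorem sum_lcp_append_singleton {N : ℕ} (ω η : List (Fin N)) :
    ∑ i : Fin N, (lcp (ω ++ [i]) η : ℝ) =
      N * lcp ω η + if ω <+: η ∧ ω ≠ η then 1 else 0 := by
  simp only [lcp_append_singleton, Nat.cast_add, Nat.cast_ite, Nat.cast_one, Nat.cast_zero,
    Finset.sum_add_distrib, sum_ite_append_singleton_prefix, Finset.sum_const, Finset.card_univ,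
    Fintype.card_fin, nsmul_eq_mul]

theorem treeLap_const_sub (N : ℕ) (c : ℝ) (f : List (Fin N) → ℝ) (ω : List (Fin N)) :
    treeLap N (fun ω => c - f ω) ω = -treeLap N f ω := by
  unfold treeLap
  split_ifs <;> simp only [Finset.sum_sub_distrib, Finset.sum_const, Finset.card_univ,
    Fintype.card_fin, nsmul_eq_mul] <;> ring

theorem treeLap_lcp (N : ℕ) (η ω : List (Fin N)) :
    treeLap N (fun ω => (lcp ω η : ℝ)) ω =
      (if ω = η then 1 else 0) - (if ω = [] then 1 else 0) := by
  rcases List.eq_nil_or_concat' ω with rfl | ⟨ω, a, rfl⟩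
  · have hchildren := sum_lcp_append_singleton [] η
    have hroot : lcp [] η = 0 := by cases η <;> rfl
    by_cases hη : [] = η <;> simp_all [treeLap]
  · have hparent := lcp_append_singleton ω η a
    simp only [treeLap, List.append_ne_nil_of_right_ne_nil ω (List.cons_ne_nil a []),
      if_false, List.dropLast_concat, sum_lcp_append_singleton, hparent, Nat.cast_add,
      Nat.cast_ite, Nat.cast_one, Nat.cast_zero]
    have hdefect : ((if ω ++ [a] <+: η then 1 else 0) : ℝ) -
        (if ω ++ [a] <+: η ∧ ω ++ [a] ≠ η then 1 else 0) = if ω ++ [a] = η then 1 else 0 := by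
      by_cases hη : ω ++ [a] = η
      · simp [hη]
      · by_cases hp : ω ++ [a] <+: η <;> simp [hp, hη]
    linear_combination hdefect

theorem tree_potential_general (N : ℕ) (η : List (Fin N)) :
    ∀ ω : List (Fin N),
      treeLap N (fun ω => (η.length : ℝ) - (lcp ω η : ℝ)) ω =
        (if ω = [] then 1 else 0) - (if ω = η then 1 else 0) := by
  intro ω
  rw [treeLap_const_sub, treeLap_lcp]
  ring

theorem tree_potential (N : ℕ) (hN : 1 ≤ N) (η : List (Fin N)) (hη : η ≠ []) :
    ∀ ω : List (Fin N),
      treeLap N (fun ω => (η.length : ℝ) - (lcp ω η : ℝ)) ω =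
        (if ω = [] then 1 else 0) - (if ω = η then 1 else 0) :=
  tree_potential_general N η
end

section
/- Consider the operator Δ on sequences u = (u₀, u₁, u₂, …) given by (Δu)₀ = u₀ - u₁ and (Δu)_n = 2u_n - u_{n-1} - u_{n+1} for n ≥ 1 (the Laplacian of the half-line graph). Let λ = (3+√5)/2 or λ = (3-√5)/2. Then the 10-periodic sequence v with period (1, 1-λ, 0, λ-1, -1, -1, λ-1, 0, 1-λ, 1) satisfies Δv = λv. -/
/-!
Extended periodically, the block `w` is an eigenvector, with eigenvalue `λ`, of the Laplacian of the
10-cycle: the ten equations are linear in `w` and reduce to `λ² = 3λ - 1`. Away from the endpoint the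
half-line Laplacian of the periodic sequence is the cycle Laplacian of `w`. At `n = 0` the block is
symmetric across the edge between positions `9` and `0` (`w (-1) = w 0`), which turns the cycle equation
at `0` into the boundary equation `v₀ - v₁ = λ v₀`.
-/

open Fin.NatCast

section CyclicEigen

variable {R : Type*} [Ring R] {m : ℕ} [NeZero m]

def IsCyclicLaplacianEigen (w : Fin m → R) (l : R) : Prop :=
  ∀ i, 2 * w i - w (i - 1) - w (i + 1) = l * w i

variable {w : Fin m → R} {l : R} {v : ℕ → R}

theorem IsCyclicLaplacianEigen.periodic_interior (hw : IsCyclicLaplacianEigen w l)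
    (hv : ∀ k : ℕ, v k = w k) {n : ℕ} (hn : 1 ≤ n) :
    2 * v n - v (n - 1) - v (n + 1) = l * v n := by
  obtain ⟨k, rfl⟩ := Nat.exists_eq_add_of_le' hn
  simpa only [hv, Nat.add_sub_cancel, Nat.cast_succ, add_sub_cancel_right] using hw (k + 1)

theorem IsCyclicLaplacianEigen.periodic_boundary (hw : IsCyclicLaplacianEigen w l)
    (hsymm : w (-1) = w 0) (hv : ∀ k : ℕ, v k = w k) :
    v 0 - v 1 = l * v 0 := by
  rw [hv, hv, Nat.cast_zero, Nat.cast_one, ← hw 0, zero_sub, zero_add, hsymm, two_mul]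
  abel

end CyclicEigen

def goldenBlock {R : Type*} [Ring R] (l : R) : Fin 10 → R :=
  ![1, 1 - l, 0, l - 1, -1, -1, l - 1, 0, 1 - l, 1]

theorem isCyclicLaplacianEigen_goldenBlock {R : Type*} [CommRing R] {l : R}
    (hl : l ^ 2 = 3 * l - 1) : IsCyclicLaplacianEigen (goldenBlock l) l := by
  intro i
  fin_cases i <;> simp [goldenBlock] <;> grind

theorem sq_eq_three_mul_sub_one_of_eq_three_pm_sqrt_five_div_two {l : ℝ}
    (hl : l = (3 + Real.sqrt 5) / 2 ∨ l = (3 - Real.sqrt 5) / 2) : l ^ 2 = 3 * l - 1 := by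
  have h5 : Real.sqrt 5 ^ 2 = 5 := Real.sq_sqrt (by norm_num)
  rcases hl with rfl | rfl <;> linear_combination h5 / 4

theorem golden_ratio_eigenvector (l : ℝ)
    (hl : l = (3 + Real.sqrt 5) / 2 ∨ l = (3 - Real.sqrt 5) / 2) :
    ∀ v : ℕ → ℝ,
      (∀ k : ℕ,
          v k = ![(1 : ℝ), 1 - l, 0, l - 1, -1, -1, l - 1, 0, 1 - l, 1] (k : Fin 10)) →
        v 0 - v 1 = l * v 0 ∧ ∀ n : ℕ, 1 ≤ n → 2 * v n - v (n - 1) - v (n + 1) = l * v n := by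
  intro v hv
  have hw := isCyclicLaplacianEigen_goldenBlock
    (sq_eq_three_mul_sub_one_of_eq_three_pm_sqrt_five_div_two hl)
  exact ⟨hw.periodic_boundary rfl hv, fun _ hn => hw.periodic_interior hv hn⟩
end
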